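/- arXiv:2305.02066 — 5 statements merged into one kernel-verified Lean document; each statement's English description precedes it below -/
import Mathlib

section
/- Let V : ℝ → ℝ be differentiable on [0, ∞) with V(t) ≥ 0 for all t ≥ 0, and suppose there are constants γ > 0 and r ∈ (0, 1) such that V'(t) ≤ −γ·(V(t))^r for all t ≥ 0. Then V(t) = 0 for all t ≥ T, where T := V(0)^{1−r} / (γ·(1−r)). -/
/-- Lyapunov criterion for finite-time stability: if `V' ≤ -γ V^r` with `r ∈ (0,1)`,
then `V` reaches zero by time `T = V(0)^(1-r) / (γ (1-r))` and stays at zero. -/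
theorem lyapunov_finite_time
    (V : ℝ → ℝ) (γ r : ℝ) (hγ : 0 < γ) (hr0 : 0 < r) (hr1 : r < 1)
    (hdiff : ∀ t ≥ (0:ℝ), DifferentiableAt ℝ V t)
    (hnonneg : ∀ t ≥ (0:ℝ), 0 ≤ V t)
    (hineq : ∀ t ≥ (0:ℝ), deriv V t ≤ -γ * (V t) ^ r) :
    ∀ t ≥ (V 0) ^ (1 - r) / (γ * (1 - r)), V t = 0 := by
  have h1r : (0:ℝ) < 1 - r := by linarith
  set T : ℝ := (V 0) ^ (1 - r) / (γ * (1 - r)) with hTdef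
  have hT0 : 0 ≤ T := div_nonneg (Real.rpow_nonneg (hnonneg 0 le_rfl) _) (by positivity)
  -- V is antitone on [0, ∞)
  have hanti : AntitoneOn V (Set.Ici 0) := by
    apply antitoneOn_of_deriv_nonpos (convex_Ici 0)
    · exact fun t ht => (hdiff t ht).continuousAt.continuousWithinAt
    · intro t ht
      rw [interior_Ici] at ht
      exact (hdiff t (le_of_lt ht)).differentiableWithinAt
    · intro t ht
      rw [interior_Ici] at ht
      have ht' : (0:ℝ) ≤ t := le_of_lt ht
      have h1 := hineq t ht'
      have h2 : 0 ≤ (V t) ^ r := Real.rpow_nonneg (hnonneg t ht') r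
      nlinarith
  suffices hVT : V T = 0 by
    intro t ht
    have htn : (0:ℝ) ≤ t := le_trans hT0 ht
    have h1 : V t ≤ V T := hanti (Set.mem_Ici.mpr hT0) (Set.mem_Ici.mpr htn) ht
    have h2 := hnonneg t htn
    linarith
  by_contra hne
  have hVTpos : 0 < V T := lt_of_le_of_ne (hnonneg T hT0) (Ne.symm hne)
  have hVpos : ∀ s ∈ Set.Icc (0:ℝ) T, 0 < V s := fun s hs =>
    lt_of_lt_of_le hVTpos (hanti (Set.mem_Ici.mpr hs.1) (Set.mem_Ici.mpr hT0) hs.2)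
  set g : ℝ → ℝ := fun s => (V s) ^ (1 - r) + γ * (1 - r) * s with hgdef
  have hgderiv : ∀ s ∈ Set.Icc (0:ℝ) T,
      HasDerivAt g ((1 - r) * (V s) ^ (1 - r - 1) * deriv V s + γ * (1 - r)) s := by
    intro s hs
    have hVs := hVpos s hs
    have hd1 : HasDerivAt (fun y : ℝ => y ^ (1 - r)) ((1 - r) * (V s) ^ (1 - r - 1)) (V s) :=
      Real.hasDerivAt_rpow_const (Or.inl hVs.ne')
    have hd2 : HasDerivAt V (deriv V s) s := (hdiff s hs.1).hasDerivAt
    have hd3 : HasDerivAt (fun s => (V s) ^ (1 - r))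
        ((1 - r) * (V s) ^ (1 - r - 1) * deriv V s) s := hd1.comp s hd2
    have hd4 : HasDerivAt (fun s : ℝ => γ * (1 - r) * s) (γ * (1 - r)) s := by
      simpa using (hasDerivAt_id s).const_mul (γ * (1 - r))
    exact hd3.add hd4
  have hg : AntitoneOn g (Set.Icc 0 T) := by
    apply antitoneOn_of_deriv_nonpos (convex_Icc 0 T)
    · exact fun s hs => (hgderiv s hs).differentiableAt.continuousAt.continuousWithinAt
    · intro s hs
      have hs' : s ∈ Set.Icc (0:ℝ) T := interior_subset hs
      exact (hgderiv s hs').differentiableAt.differentiableWithinAt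
    · intro s hs
      have hs' : s ∈ Set.Icc (0:ℝ) T := interior_subset hs
      rw [(hgderiv s hs').deriv]
      have hVs := hVpos s hs'
      have hpow : (V s) ^ (1 - r - 1) * (V s) ^ r = 1 := by
        rw [← Real.rpow_add hVs]
        norm_num
      have h1 := hineq s hs'.1
      have hpos : 0 < (V s) ^ (1 - r - 1) := Real.rpow_pos_of_pos hVs _
      have hk : (1 - r) * (V s) ^ (1 - r - 1) * deriv V s ≤
          (1 - r) * (V s) ^ (1 - r - 1) * (-γ * (V s) ^ r) :=
        mul_le_mul_of_nonneg_left h1 (le_of_lt (mul_pos h1r hpos))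
      have heq : (1 - r) * (V s) ^ (1 - r - 1) * (-γ * (V s) ^ r) = -(γ * (1 - r)) := by
        calc (1 - r) * (V s) ^ (1 - r - 1) * (-γ * (V s) ^ r)
            = -(γ * (1 - r)) * ((V s) ^ (1 - r - 1) * (V s) ^ r) := by ring
          _ = -(γ * (1 - r)) := by rw [hpow]; ring
      linarith [hk, heq]
  have hgTg0 : g T ≤ g 0 := hg (Set.mem_Icc.mpr ⟨le_rfl, hT0⟩) (Set.mem_Icc.mpr ⟨hT0, le_rfl⟩) hT0
  have hTeq : γ * (1 - r) * T = (V 0) ^ (1 - r) := by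
    rw [hTdef]
    field_simp
  have hVTp : 0 < (V T) ^ (1 - r) := Real.rpow_pos_of_pos hVTpos _
  simp only [hgdef, mul_zero, add_zero] at hgTg0
  linarith
end

section
/- Let V : ℝ → ℝ be differentiable on [0, ∞) with V(t) ≥ 0 for all t ≥ 0, and suppose there are constants γ₁ > 0, γ₂ > 0 and r ∈ (0, 1) such that V'(t) ≤ −γ₁·V(t) − γ₂·(V(t))^r for all t ≥ 0. Then V(t) = 0 for all t ≥ T, where T := (1/(γ₁·(1−r)))·ln((γ₁·V(0)^{1−r} + γ₂)/γ₂). -/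
/-! The substitution `W = V ^ (1 - r)` linearises the inequality: wherever `V > 0`,
`W' ≤ -(1 - r) (γ₁ W + γ₂)`, so `exp (γ₁ (1 - r) t) (W t + γ₂ / γ₁)` is nonincreasing.
If `V` were still positive at a time `t ≥ T`, this quantity would exceed its value at `0`
because `exp (γ₁ (1 - r) T) · γ₂ / γ₁ = W 0 + γ₂ / γ₁`. -/

open Real Set

theorem antitoneOn_Ici_of_deriv_nonpos {f : ℝ → ℝ} {a : ℝ}
    (hf : ∀ x ≥ a, DifferentiableAt ℝ f x) (hf' : ∀ x ≥ a, deriv f x ≤ 0) :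
    AntitoneOn f (Ici a) :=
  antitoneOn_of_deriv_nonpos (convex_Ici a)
    (fun x hx => (hf x hx).continuousAt.continuousWithinAt)
    (fun x hx => (hf x (interior_subset hx)).differentiableWithinAt)
    (fun x hx => hf' x (interior_subset hx))

/-- Integrating factor for the linear differential inequality `W' ≤ -c (W + k)`. -/
theorem antitoneOn_exp_mul_mul_add_of_hasDerivAt {W W' : ℝ → ℝ} {D : Set ℝ} {c k : ℝ}
    (hD : Convex ℝ D) (hcont : ContinuousOn W D)
    (hW : ∀ x ∈ interior D, HasDerivAt W (W' x) x)
    (hle : ∀ x ∈ interior D, W' x ≤ -c * (W x + k)) :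
    AntitoneOn (fun x => exp (c * x) * (W x + k)) D := by
  have hderiv : ∀ x ∈ interior D, HasDerivAt (fun x => exp (c * x) * (W x + k))
      (exp (c * x) * (c * (W x + k) + W' x)) x := fun x hx =>
    ((((hasDerivAt_id x).const_mul c).exp).mul ((hW x hx).add_const k)).congr_deriv (by
      simp only [id]; ring)
  refine antitoneOn_of_hasDerivWithinAt_nonpos hD ?_ (fun x hx => (hderiv x hx).hasDerivWithinAt) ?_
  · exact ((continuous_const.mul continuous_id).rexp.continuousOn).mul (hcont.add continuousOn_const)
  · intro x hx
    exact mul_nonpos_of_nonneg_of_nonpos (exp_pos _).le (by linarith [hle x hx])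

theorem mul_rpow_one_sub_le_of_le {x v γ₁ γ₂ r : ℝ} (hx : 0 < x) (hγ₁ : γ₁ ≠ 0) (hr : r ≤ 1)
    (hv : v ≤ -γ₁ * x - γ₂ * x ^ r) :
    v * (1 - r) * x ^ (1 - r - 1) ≤ -(γ₁ * (1 - r)) * (x ^ (1 - r) + γ₂ / γ₁) := by
  have hxr : 0 < x ^ (-r) := rpow_pos_of_pos hx _
  have hx1 : x * x ^ (-r) = x ^ (1 - r) := by
    rw [sub_eq_add_neg, rpow_add hx, rpow_one]
  have hxr1 : x ^ r * x ^ (-r) = 1 := by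
    rw [← rpow_add hx, add_neg_cancel, rpow_zero]
  have hmul : v * x ^ (-r) ≤ -γ₁ * x ^ (1 - r) - γ₂ := by
    calc v * x ^ (-r) ≤ (-γ₁ * x - γ₂ * x ^ r) * x ^ (-r) := mul_le_mul_of_nonneg_right hv hxr.le
      _ = -γ₁ * x ^ (1 - r) - γ₂ := by linear_combination (-γ₁) * hx1 - γ₂ * hxr1
  have h1r : 0 ≤ 1 - r := by linarith
  rw [show 1 - r - 1 = -r by ring, mul_right_comm]
  calc v * x ^ (-r) * (1 - r) ≤ (-γ₁ * x ^ (1 - r) - γ₂) * (1 - r) :=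
        mul_le_mul_of_nonneg_right hmul h1r
    _ = -(γ₁ * (1 - r)) * (x ^ (1 - r) + γ₂ / γ₁) := by field_simp; ring

theorem exp_mul_rpow_one_sub_add_le {V : ℝ → ℝ} {γ₁ γ₂ r t : ℝ} (hγ₁ : γ₁ ≠ 0) (hr : r ≤ 1)
    (ht : 0 ≤ t) (hdiff : ∀ s ∈ Icc 0 t, DifferentiableAt ℝ V s) (hpos : ∀ s ∈ Icc 0 t, 0 < V s)
    (hineq : ∀ s ∈ Icc 0 t, deriv V s ≤ -γ₁ * V s - γ₂ * V s ^ r) :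
    exp (γ₁ * (1 - r) * t) * (V t ^ (1 - r) + γ₂ / γ₁) ≤ V 0 ^ (1 - r) + γ₂ / γ₁ := by
  have hW : ∀ s ∈ Icc 0 t, HasDerivAt (fun s => V s ^ (1 - r))
      (deriv V s * (1 - r) * V s ^ (1 - r - 1)) s := fun s hs =>
    (hdiff s hs).hasDerivAt.rpow_const (Or.inl (hpos s hs).ne')
  have hanti := antitoneOn_exp_mul_mul_add_of_hasDerivAt (convex_Icc 0 t)
    (fun s hs => (hW s hs).continuousAt.continuousWithinAt)
    (fun s hs => hW s (interior_subset hs))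
    (fun s hs => mul_rpow_one_sub_le_of_le (hpos s (interior_subset hs)) hγ₁ hr
      (hineq s (interior_subset hs)))
  simpa using hanti (left_mem_Icc.2 ht) (right_mem_Icc.2 ht) ht

theorem lyapunov_finite_time_linear_plus_fractional_general
    (V : ℝ → ℝ) (γ₁ γ₂ r : ℝ) (hγ₁ : 0 < γ₁) (hγ₂ : 0 < γ₂) (hr1 : r < 1)
    (hdiff : ∀ t ≥ (0:ℝ), DifferentiableAt ℝ V t)
    (hnonneg : ∀ t ≥ (0:ℝ), 0 ≤ V t)
    (hineq : ∀ t ≥ (0:ℝ), deriv V t ≤ -γ₁ * V t - γ₂ * (V t) ^ r) :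
    ∀ t ≥ (1 / (γ₁ * (1 - r))) * Real.log ((γ₁ * (V 0) ^ (1 - r) + γ₂) / γ₂), V t = 0 := by
  intro t ht
  have hc : 0 < γ₁ * (1 - r) := mul_pos hγ₁ (by linarith)
  have hA : 1 ≤ (γ₁ * V 0 ^ (1 - r) + γ₂) / γ₂ := by
    rw [le_div_iff₀ hγ₂]
    nlinarith [rpow_nonneg (hnonneg 0 le_rfl) (1 - r)]
  have ht0 : 0 ≤ t := le_trans (mul_nonneg (by positivity) (log_nonneg hA)) ht
  have hexp : (γ₁ * V 0 ^ (1 - r) + γ₂) / γ₂ ≤ exp (γ₁ * (1 - r) * t) := by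
    rw [← log_le_iff_le_exp (by linarith), ← div_le_iff₀' hc]
    rwa [one_div_mul_eq_div] at ht
  by_contra hne
  have hVt : 0 < V t := (hnonneg t ht0).lt_of_ne' hne
  have hanti : AntitoneOn V (Ici 0) := antitoneOn_Ici_of_deriv_nonpos hdiff fun s hs => by
    nlinarith [hineq s hs, hnonneg s hs, rpow_nonneg (hnonneg s hs) r]
  have hpos : ∀ s ∈ Icc 0 t, 0 < V s := fun s hs => hVt.trans_le (hanti hs.1 ht0 hs.2)
  have hdecay := exp_mul_rpow_one_sub_add_le hγ₁.ne' hr1.le ht0 (fun s hs => hdiff s hs.1) hpos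
    (fun s hs => hineq s hs.1)
  rw [div_le_iff₀ hγ₂] at hexp
  have hk : ∀ x, γ₁ * (x + γ₂ / γ₁) = γ₁ * x + γ₂ := fun x => by field_simp
  have hdecay' := mul_le_mul_of_nonneg_left hdecay hγ₁.le
  rw [mul_left_comm, hk, hk] at hdecay'
  nlinarith [mul_pos hγ₁ (mul_pos (exp_pos (γ₁ * (1 - r) * t)) (rpow_pos_of_pos hVt (1 - r)))]

/-- Strengthened finite-time Lyapunov criterion: if `V' ≤ -γ₁ V - γ₂ V^r` with `r ∈ (0,1)`,
then `V` reaches zero by time `T = (1/(γ₁ (1-r))) ln((γ₁ V(0)^(1-r) + γ₂)/γ₂)`. -/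
theorem lyapunov_finite_time_linear_plus_fractional
    (V : ℝ → ℝ) (γ₁ γ₂ r : ℝ) (hγ₁ : 0 < γ₁) (hγ₂ : 0 < γ₂) (hr0 : 0 < r) (hr1 : r < 1)
    (hdiff : ∀ t ≥ (0:ℝ), DifferentiableAt ℝ V t)
    (hnonneg : ∀ t ≥ (0:ℝ), 0 ≤ V t)
    (hineq : ∀ t ≥ (0:ℝ), deriv V t ≤ -γ₁ * V t - γ₂ * (V t) ^ r) :
    ∀ t ≥ (1 / (γ₁ * (1 - r))) * Real.log ((γ₁ * (V 0) ^ (1 - r) + γ₂) / γ₂), V t = 0 :=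
  lyapunov_finite_time_linear_plus_fractional_general V γ₁ γ₂ r hγ₁ hγ₂ hr1 hdiff hnonneg hineq
end

section
/- Let k_p be a positive real number satisfying k_p = exp(−(k_p + 1)) (numerically k_p ≈ 0.2785). Then for every ε > 0 and every η ∈ ℝ, 0 ≤ |η| − η·tanh(η/ε) ≤ k_p·ε. -/
/-!
With `x = η / ε` the quantity is `ε (|x| - x tanh x) = ε · 2|x| / (exp (2|x|) + 1)`, so everything
reduces to `t ≤ k (exp t + 1)` for all real `t`. As `k exp (k + 1) = 1`, this reads
`exp (t - (k + 1)) ≥ t - k`, the tangent-line bound for `exp` at `t = k + 1`, which is where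
`t / (exp t + 1)` attains its maximum `k`.
-/

open Real

theorem le_mul_exp_add_one_of_eq_exp {k : ℝ} (hk : k = exp (-(k + 1))) (t : ℝ) :
    t ≤ k * (exp t + 1) := by
  have hk_exp : k * exp t = exp (t - (k + 1)) := by
    conv_lhs => rw [hk]
    rw [← exp_add]; ring_nf
  have := add_one_le_exp (t - (k + 1))
  rw [mul_add, hk_exp]
  linarith

theorem sub_mul_tanh_eq (x : ℝ) : x - x * tanh x = 2 * x / (exp (2 * x) + 1) := by
  have h : exp (2 * x) = exp x * exp x := by rw [← exp_add, two_mul]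
  rw [tanh_eq, h, exp_neg]
  field_simp
  ring

theorem abs_mul_tanh_abs (x : ℝ) : |x| * tanh |x| = x * tanh x := by
  rcases abs_choice x with h | h <;> rw [h]
  rw [tanh_neg, neg_mul_neg]

theorem abs_sub_mul_tanh_eq (x : ℝ) :
    |x| - x * tanh x = 2 * |x| / (exp (2 * |x|) + 1) := by
  rw [← abs_mul_tanh_abs, sub_mul_tanh_eq]

theorem abs_sub_mul_tanh_nonneg (x : ℝ) : 0 ≤ |x| - x * tanh x := by
  rw [abs_sub_mul_tanh_eq]
  positivity

theorem abs_sub_mul_tanh_le_of_eq_exp {k : ℝ} (hk : k = exp (-(k + 1))) (x : ℝ) :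
    |x| - x * tanh x ≤ k := by
  rw [abs_sub_mul_tanh_eq, div_le_iff₀ (by positivity)]
  exact le_mul_exp_add_one_of_eq_exp hk _

theorem tanh_abs_inequality_general
    (k_p : ℝ) (hk_eq : k_p = Real.exp (-(k_p + 1))) :
    ∀ ε > (0:ℝ), ∀ η : ℝ,
      0 ≤ |η| - η * Real.tanh (η / ε) ∧ |η| - η * Real.tanh (η / ε) ≤ k_p * ε := by
  intro ε hε η
  have hscale : |η| - η * tanh (η / ε) = ε * (|η / ε| - η / ε * tanh (η / ε)) := by
    rw [mul_sub, abs_div, abs_of_pos hε, mul_div_cancel₀ _ hε.ne', ← mul_assoc,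
      mul_div_cancel₀ _ hε.ne']
  rw [hscale]
  exact ⟨mul_nonneg hε.le (abs_sub_mul_tanh_nonneg _),
    (mul_le_mul_of_nonneg_left (abs_sub_mul_tanh_le_of_eq_exp hk_eq _) hε.le).trans_eq
      (mul_comm _ _)⟩

/-- The key robust-control inequality: for `k_p > 0` with `k_p = exp(-(k_p + 1))`,
for every `ε > 0` and `η ∈ ℝ`, `0 ≤ |η| - η tanh(η/ε) ≤ k_p ε`. -/
theorem tanh_abs_inequality
    (k_p : ℝ) (hk_pos : 0 < k_p) (hk_eq : k_p = Real.exp (-(k_p + 1))) :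
    ∀ ε > (0:ℝ), ∀ η : ℝ,
      0 ≤ |η| - η * Real.tanh (η / ε) ∧ |η| - η * Real.tanh (η / ε) ≤ k_p * ε :=
  tanh_abs_inequality_general k_p hk_eq
end

section
/- Let u_m > 0 and define the symmetric linear saturation sat(v) := v if |v| < u_m and sat(v) := sgn(v)·u_m if |v| ≥ u_m (equivalently sat(v) = max(−u_m, min(u_m, v))). Then for all v ∈ ℝ, |sat(v) − u_m·tanh(v/u_m)| ≤ u_m·(1 − tanh(1)). -/
/-!
Rescaling `v = u_m t` turns the error into `u_m (sat 1 t - tanh t)`, and since both `sat 1` and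
`tanh` are odd it suffices to bound `sat 1 t - tanh t` from above. For `|t| < 1` this is
`t - tanh t ≤ 1 - tanh 1`, which holds because `t - tanh t` has derivative `tanh² t ≥ 0`; for
`t ≥ 1` it is `tanh 1 ≤ tanh t`, and for `t ≤ -1` the error `-1 - tanh t` is negative.
-/

open Real

/-- The symmetric linear saturation nonlinearity with limit `u_m`:
`sat v = v` if `|v| < u_m`, and `sat v = sgn(v) u_m` otherwise
(equivalently `sat v = max (-u_m) (min u_m v)`). -/
noncomputable def sat (u_m v : ℝ) : ℝ :=
  if |v| < u_m then v else Real.sign v * u_m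

namespace Real

theorem hasDerivAt_tanh (x : ℝ) : HasDerivAt tanh (1 - tanh x ^ 2) x := by
  have hcosh : cosh x ≠ 0 := (cosh_pos x).ne'
  have hval : (cosh x * cosh x - sinh x * sinh x) / cosh x ^ 2 = 1 - tanh x ^ 2 := by
    rw [tanh_eq_sinh_div_cosh]
    field_simp
  rw [← hval, show tanh = sinh / cosh from funext tanh_eq_sinh_div_cosh]
  exact (hasDerivAt_sinh x).div (hasDerivAt_cosh x) hcosh

theorem tanh_strictMono : StrictMono tanh :=
  strictMono_of_deriv_pos fun x => by
    rw [(hasDerivAt_tanh x).deriv]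
    linarith [tanh_sq_lt_one x]

theorem monotone_id_sub_tanh : Monotone fun x => x - tanh x := by
  have hderiv (x : ℝ) : HasDerivAt (fun x => x - tanh x) (tanh x ^ 2) x :=
    ((hasDerivAt_id' x).sub (hasDerivAt_tanh x)).congr_deriv (by ring)
  exact monotone_of_deriv_nonneg (fun x => (hderiv x).differentiableAt)
    fun x => (hderiv x).deriv ▸ sq_nonneg _

end Real

theorem sat_neg (u v : ℝ) : sat u (-v) = -sat u v := by
  unfold sat
  rw [abs_neg, Real.sign_neg]
  split_ifs <;> ring

theorem sat_eq_mul_sat_one {u : ℝ} (hu : 0 < u) (v : ℝ) : sat u v = u * sat 1 (v / u) := by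
  have hsign : Real.sign (v / u) = Real.sign v := by
    rcases lt_trichotomy v 0 with hv | rfl | hv
    · rw [sign_of_neg hv, sign_of_neg (div_neg_of_neg_of_pos hv hu)]
    · simp
    · rw [sign_of_pos hv, sign_of_pos (div_pos hv hu)]
  unfold sat
  simp only [abs_div, abs_of_pos hu, div_lt_one hu, hsign]
  split_ifs
  · field_simp
  · ring

theorem sat_one_sub_tanh_le (t : ℝ) : sat 1 t - tanh t ≤ 1 - tanh 1 := by
  unfold sat
  split_ifs with hlt
  · exact monotone_id_sub_tanh (abs_lt.mp hlt).2.le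
  rcases le_or_gt 0 t with ht | ht
  · rw [abs_of_nonneg ht, not_lt] at hlt
    rw [sign_of_pos (by linarith), one_mul]
    linarith [tanh_strictMono.monotone hlt]
  · rw [sign_of_neg ht]
    linarith [neg_one_lt_tanh t, tanh_lt_one 1]

theorem abs_sat_one_sub_tanh_le (t : ℝ) : |sat 1 t - tanh t| ≤ 1 - tanh 1 := by
  have hneg := sat_one_sub_tanh_le (-t)
  rw [sat_neg, tanh_neg] at hneg
  exact abs_le.mpr ⟨by linarith, sat_one_sub_tanh_le t⟩

/-- The hyperbolic-tangent approximation error of the symmetric saturation is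
uniformly bounded: `|sat v - u_m tanh (v/u_m)| ≤ u_m (1 - tanh 1)`. -/
theorem sat_tanh_approx_bound (u_m : ℝ) (hu : 0 < u_m) (v : ℝ) :
    |sat u_m v - u_m * Real.tanh (v / u_m)| ≤ u_m * (1 - Real.tanh 1) := by
  rw [sat_eq_mul_sat_one hu, ← mul_sub, abs_mul, abs_of_pos hu]
  exact mul_le_mul_of_nonneg_left (abs_sat_one_sub_tanh_le _) hu.le
end

section
/- Let k > 0 and let α, z be real numbers with |α| < k and |z + α| < k. Then ∫₀ᶻ σ·k²/(k² − (σ + α)²) dσ ≥ z²/2. -/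
open intervalIntegral


/-- Lower-bound property of the integral barrier Lyapunov functional:
for `k > 0`, `|α| < k`, `|z + α| < k`,
`∫₀ᶻ σ k²/(k² - (σ + α)²) dσ ≥ z²/2`. -/
theorem iBLF_lower_bound
    (k α z : ℝ) (hk : 0 < k) (hα : |α| < k) (hzα : |z + α| < k) :
    z ^ 2 / 2 ≤ ∫ σ in (0:ℝ)..z, σ * k ^ 2 / (k ^ 2 - (σ + α) ^ 2) := by
  set f : ℝ → ℝ := fun σ => σ * k ^ 2 / (k ^ 2 - (σ + α) ^ 2) with hf
  have key : ∀ σ ∈ Set.uIcc (0:ℝ) z, 0 < k ^ 2 - (σ + α) ^ 2 := by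
    intro σ hσ
    have habs : |σ + α| < k := by
      have h1 : |σ + α| ≤ max |0 + α| |z + α| := by
        rcases Set.mem_uIcc.mp hσ with ⟨h0, hz⟩ | ⟨hz, h0⟩
        · exact abs_le_max_abs_abs (by linarith) (by linarith)
        · exact (abs_le_max_abs_abs (a := z + α) (b := σ + α) (c := 0 + α)
            (by linarith) (by linarith)).trans (by rw [max_comm])
      calc |σ + α| ≤ max |0 + α| |z + α| := h1
        _ < k := by
          rw [max_lt_iff]; constructor
          · simpa using hα
          · exact hzα
    have := abs_lt.mp habs
    nlinarith [sq_nonneg (σ + α)]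
  have hcont : ContinuousOn f (Set.uIcc (0:ℝ) z) := by
    apply ContinuousOn.div
    · exact (continuous_id.mul continuous_const).continuousOn
    · exact (Continuous.continuousOn (by continuity))
    · intro σ hσ
      exact ne_of_gt (key σ hσ)
  have hint : IntervalIntegrable f MeasureTheory.volume 0 z :=
    hcont.intervalIntegrable
  have hid : IntervalIntegrable (fun σ : ℝ => σ) MeasureTheory.volume 0 z :=
    (continuous_id).intervalIntegrable 0 z
  rcases le_or_gt 0 z with hz | hz
  · have hmono : ∀ σ ∈ Set.Icc (0:ℝ) z, σ ≤ f σ := by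
      intro σ hσ
      have hd := key σ (by rw [Set.uIcc_of_le hz]; exact hσ)
      rw [hf]
      rw [le_div_iff₀ hd]
      have hσ0 : 0 ≤ σ := hσ.1
      nlinarith [sq_nonneg (σ + α)]
    have := intervalIntegral.integral_mono_on hz hid hint hmono
    simp only [integral_id] at this
    nlinarith
  · have hmono : ∀ σ ∈ Set.Icc z (0:ℝ), f σ ≤ σ := by
      intro σ hσ
      have hd := key σ (by rw [Set.uIcc_of_ge hz.le]; exact hσ)
      rw [hf]
      rw [div_le_iff₀ hd]
      have hσ0 : σ ≤ 0 := hσ.2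
      nlinarith [sq_nonneg (σ + α)]
    have := intervalIntegral.integral_mono_on hz.le hint.symm hid.symm hmono
    simp only [integral_id] at this
    rw [intervalIntegral.integral_symm] at this
    nlinarith
end
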